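/- Along every solution t ↦ (w(t),ẇ(t)) of (8) (for any fixed a ≥ 0 and γ ∈ ℝ), the pulled-back energy Ĥ = ½ (ẇ+γw)·(𝐈⁻¹(ẇ+γw)) + ½ a² w·(𝐌⁻¹w) is constant in t. Moreover, if a = 0 then ‖ẇ(t)+γw(t)‖ is constant in t, and if in addition ‖w(0)‖ = 1 and w(0)·ẇ(0) = 0 then ‖ẇ(t)‖ is constant in t. -/

import Mathlib

noncomputable section

open scoped RealInnerProductSpace

/-- ℝ³ with the standard (Euclidean) inner product and norm. -/
abbrev E3 : Type := EuclideanSpace ℝ (Fin 3)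

/-- Build a vector of `E3` from its three coordinates. -/
def vec3 (x y z : ℝ) : E3 := (WithLp.equiv 2 (Fin 3 → ℝ)).symm ![x, y, z]

/-- The standard cross product on ℝ³. -/
def cross3 (u v : E3) : E3 :=
  vec3 (u 1 * v 2 - u 2 * v 1) (u 2 * v 0 - u 0 * v 2) (u 0 * v 1 - u 1 * v 0)

/-- The vertical unit vector k = (0,0,1). -/
def kvec : E3 := vec3 0 0 1

/-- 𝐈⁻¹ u = (u₁/I₁, u₂/I₂, u₃/I₃). -/
def Iinv (I1 I2 I3 : ℝ) (u : E3) : E3 := vec3 (u 0 / I1) (u 1 / I2) (u 2 / I3)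

/-- 𝐌⁻¹ u = (u₁/M₁, u₂/M₂, u₃/M₃). -/
def Minv (M1 M2 M3 : ℝ) (u : E3) : E3 := vec3 (u 0 / M1) (u 1 / M2) (u 2 / M3)

/-- `(pm, pv) : ℝ → ℝ³ × ℝ³` is a (global) solution of the underwater-vehicle
Poisson system (60): dπ/dt = π×(𝐈⁻¹π) + p×(𝐌⁻¹p), dp/dt = p×(𝐈⁻¹π). -/
def IsSol60 (I1 I2 I3 M1 M2 M3 : ℝ) (pm pv : ℝ → E3) : Prop :=
  (∀ t : ℝ, HasDerivAt pm
      (cross3 (pm t) (Iinv I1 I2 I3 (pm t)) + cross3 (pv t) (Minv M1 M2 M3 (pv t))) t) ∧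
  (∀ t : ℝ, HasDerivAt pv (cross3 (pv t) (Iinv I1 I2 I3 (pm t))) t)

/-- Solution of (60) on a subset `J ⊆ ℝ`. -/
def IsSol60On (I1 I2 I3 M1 M2 M3 : ℝ) (J : Set ℝ) (pm pv : ℝ → E3) : Prop :=
  (∀ t ∈ J, HasDerivWithinAt pm
      (cross3 (pm t) (Iinv I1 I2 I3 (pm t)) + cross3 (pv t) (Minv M1 M2 M3 (pv t))) J t) ∧
  (∀ t ∈ J, HasDerivWithinAt pv (cross3 (pv t) (Iinv I1 I2 I3 (pm t))) J t)

/-- The blown-up space P̂ = {(w,ẇ,a,γ) : ‖w‖ = 1, w·ẇ = 0, a ≥ 0} ⊆ ℝ³×ℝ³×ℝ×ℝ. -/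
def Phat : Set (E3 × E3 × ℝ × ℝ) :=
  {x | ‖x.1‖ = 1 ∧ ⟪x.1, x.2.1⟫ = 0 ∧ 0 ≤ x.2.2.1}

/-- The blow-down map β(w,ẇ,a,γ) = (ẇ + γw, aw). -/
def blowdown (x : E3 × E3 × ℝ × ℝ) : E3 × E3 :=
  (x.2.1 + x.2.2.2 • x.1, x.2.2.1 • x.1)

/-- `(w, dw) : ℝ → ℝ³ × ℝ³` is a (global) solution of the blown-up dynamics (8)
with fixed parameters `a`, `γ`:
dw/dt = w×(𝐈⁻¹(ẇ+γw)), dẇ/dt = ẇ×(𝐈⁻¹(ẇ+γw)) + a² w×(𝐌⁻¹w). -/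
def IsSol8 (I1 I2 I3 M1 M2 M3 a γ : ℝ) (w dw : ℝ → E3) : Prop :=
  (∀ t : ℝ, HasDerivAt w (cross3 (w t) (Iinv I1 I2 I3 (dw t + γ • w t))) t) ∧
  (∀ t : ℝ, HasDerivAt dw
      (cross3 (dw t) (Iinv I1 I2 I3 (dw t + γ • w t))
        + a ^ 2 • cross3 (w t) (Minv M1 M2 M3 (w t))) t)

/-- Solution of (8) on a subset `J ⊆ ℝ`. -/
def IsSol8On (I1 I2 I3 M1 M2 M3 a γ : ℝ) (J : Set ℝ) (w dw : ℝ → E3) : Prop :=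
  (∀ t ∈ J, HasDerivWithinAt w (cross3 (w t) (Iinv I1 I2 I3 (dw t + γ • w t))) J t) ∧
  (∀ t ∈ J, HasDerivWithinAt dw
      (cross3 (dw t) (Iinv I1 I2 I3 (dw t + γ • w t))
        + a ^ 2 • cross3 (w t) (Minv M1 M2 M3 (w t))) J t)

/-!
The blow-down `(w, ẇ) ↦ (ẇ + γw, aw)` maps solutions of (8) to solutions of the underwater-vehicle
system (60), and `Ĥ` is the pullback of the Hamiltonian `½ π·𝐈⁻¹π + ½ p·𝐌⁻¹p` of (60), which is
conserved because `𝐈⁻¹` and `𝐌⁻¹` are symmetric and the triple product is alternating.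
When `a = 0`, both `ẇ + γw` and `ẇ` evolve by an equation of the form `x' = x × y`, so `x' ⊥ x` and
`‖x‖` is constant.
-/

lemma eq_of_forall_hasDerivAt_zero {f : ℝ → ℝ} (hf : ∀ t, HasDerivAt f 0 t) (s t : ℝ) :
    f t = f s :=
  is_const_of_deriv_eq_zero (fun x => (hf x).differentiableAt) (fun x => (hf x).deriv) t s

section InnerProductSpace

variable {F : Type*} [NormedAddCommGroup F] [InnerProductSpace ℝ F]

lemma norm_eq_of_forall_inner_hasDerivAt_eq_zero {g g' : ℝ → F}
    (hg : ∀ t, HasDerivAt g (g' t) t) (horth : ∀ t, ⟪g t, g' t⟫ = 0) (s t : ℝ) :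
    ‖g t‖ = ‖g s‖ := by
  have hsq : ‖g t‖ ^ 2 = ‖g s‖ ^ 2 :=
    eq_of_forall_hasDerivAt_zero (f := (‖g ·‖ ^ 2))
      (fun t => by simpa only [horth t, mul_zero] using (hg t).norm_sq) s t
  exact (sq_eq_sq₀ (norm_nonneg _) (norm_nonneg _)).1 hsq

lemma HasDerivAt.inner_apply_self [FiniteDimensional ℝ F] {T : F →ₗ[ℝ] F} (hT : T.IsSymmetric)
    {p : ℝ → F} {p' : F} {t : ℝ} (hp : HasDerivAt p p' t) :
    HasDerivAt (fun s => ⟪p s, T (p s)⟫) (2 * ⟪p', T (p t)⟫) t := by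
  have hTp : HasDerivAt (fun s => T (p s)) (T p') t :=
    T.toContinuousLinearMap.hasFDerivAt.comp_hasDerivAt t hp
  refine (hp.inner ℝ hTp).congr_deriv ?_
  rw [← hT, real_inner_comm]
  ring

end InnerProductSpace

lemma vec3_apply_zero (x y z : ℝ) : vec3 x y z 0 = x := rfl

lemma vec3_apply_one (x y z : ℝ) : vec3 x y z 1 = y := rfl

lemma vec3_apply_two (x y z : ℝ) : vec3 x y z 2 = z := rfl

lemma E3.ext_three {u v : E3} (h0 : u 0 = v 0) (h1 : u 1 = v 1) (h2 : u 2 = v 2) : u = v := by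
  ext i
  fin_cases i <;> assumption

lemma E3.inner_eq_coord_sum (u v : E3) : ⟪u, v⟫ = u 0 * v 0 + u 1 * v 1 + u 2 * v 2 := by
  simp [PiLp.inner_apply, Fin.sum_univ_three, mul_comm]

lemma inner_cross3_self_left (u v : E3) : ⟪cross3 u v, u⟫ = 0 := by
  simp only [E3.inner_eq_coord_sum, cross3, vec3_apply_zero, vec3_apply_one, vec3_apply_two]
  ring

lemma inner_cross3_self_right (u v : E3) : ⟪cross3 u v, v⟫ = 0 := by
  simp only [E3.inner_eq_coord_sum, cross3, vec3_apply_zero, vec3_apply_one, vec3_apply_two]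
  ring

lemma inner_cross3_swap (u v x : E3) : ⟪cross3 u v, x⟫ = -⟪cross3 u x, v⟫ := by
  simp only [E3.inner_eq_coord_sum, cross3, vec3_apply_zero, vec3_apply_one, vec3_apply_two]
  ring

lemma cross3_add_left (u v x : E3) : cross3 (u + v) x = cross3 u x + cross3 v x := by
  apply E3.ext_three <;> simp [cross3, vec3_apply_zero, vec3_apply_one, vec3_apply_two] <;> ring

lemma cross3_smul_left (c : ℝ) (u x : E3) : cross3 (c • u) x = c • cross3 u x := by
  apply E3.ext_three <;> simp [cross3, vec3_apply_zero, vec3_apply_one, vec3_apply_two] <;> ring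

lemma cross3_smul_right (c : ℝ) (u x : E3) : cross3 u (c • x) = c • cross3 u x := by
  apply E3.ext_three <;> simp [cross3, vec3_apply_zero, vec3_apply_one, vec3_apply_two] <;> ring

lemma cross3_zero_left (x : E3) : cross3 0 x = 0 := by
  simpa using cross3_smul_left 0 0 x

/-- `Minv` is the same function as `Iinv`, so this linear map also serves for `Minv`. -/
def Iinv.linearMap (I1 I2 I3 : ℝ) : E3 →ₗ[ℝ] E3 where
  toFun := Iinv I1 I2 I3
  map_add' u v := by
    apply E3.ext_three <;> simp [Iinv, vec3_apply_zero, vec3_apply_one, vec3_apply_two] <;> ring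
  map_smul' c u := by
    apply E3.ext_three <;> simp [Iinv, vec3_apply_zero, vec3_apply_one, vec3_apply_two] <;> ring

lemma Iinv.isSymmetric_linearMap (I1 I2 I3 : ℝ) : (Iinv.linearMap I1 I2 I3).IsSymmetric := by
  intro u v
  simp only [Iinv.linearMap, LinearMap.coe_mk, AddHom.coe_mk, E3.inner_eq_coord_sum, Iinv,
    vec3_apply_zero, vec3_apply_one, vec3_apply_two]
  ring

lemma Minv_smul (M1 M2 M3 c : ℝ) (u : E3) : Minv M1 M2 M3 (c • u) = c • Minv M1 M2 M3 u :=
  (Iinv.linearMap M1 M2 M3).map_smul c u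

def hamiltonian60 (I1 I2 I3 M1 M2 M3 : ℝ) (π p : E3) : ℝ :=
  (1 / 2) * ⟪π, Iinv I1 I2 I3 π⟫ + (1 / 2) * ⟪p, Minv M1 M2 M3 p⟫

lemma IsSol60.hamiltonian60_eq {I1 I2 I3 M1 M2 M3 : ℝ} {pm pv : ℝ → E3}
    (h : IsSol60 I1 I2 I3 M1 M2 M3 pm pv) (s t : ℝ) :
    hamiltonian60 I1 I2 I3 M1 M2 M3 (pm t) (pv t)
      = hamiltonian60 I1 I2 I3 M1 M2 M3 (pm s) (pv s) := by
  refine eq_of_forall_hasDerivAt_zero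
    (f := fun t => hamiltonian60 I1 I2 I3 M1 M2 M3 (pm t) (pv t)) (fun t => ?_) s t
  have hπ := (h.1 t).inner_apply_self (Iinv.isSymmetric_linearMap I1 I2 I3)
  have hp := (h.2 t).inner_apply_self (Iinv.isSymmetric_linearMap M1 M2 M3)
  refine ((hπ.const_mul (1 / 2)).add (hp.const_mul (1 / 2))).congr_deriv ?_
  change 1 / 2 * (2 * ⟪_, Iinv I1 I2 I3 (pm t)⟫) + 1 / 2 * (2 * ⟪_, Minv M1 M2 M3 (pv t)⟫) = 0
  rw [inner_add_left, inner_cross3_self_right, inner_cross3_swap (pv t) (Minv M1 M2 M3 (pv t))]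
  ring

lemma IsSol8.isSol60_blowdown {I1 I2 I3 M1 M2 M3 a γ : ℝ} {w dw : ℝ → E3}
    (h : IsSol8 I1 I2 I3 M1 M2 M3 a γ w dw) :
    IsSol60 I1 I2 I3 M1 M2 M3 (fun t => (blowdown (w t, dw t, a, γ)).1)
      (fun t => (blowdown (w t, dw t, a, γ)).2) := by
  refine ⟨fun t => ?_, fun t => ?_⟩
  · refine ((h.2 t).add ((h.1 t).const_smul γ)).congr_deriv ?_
    simp only [blowdown, cross3_add_left, cross3_smul_left, Minv_smul, cross3_smul_right]
    module
  · exact ((h.1 t).const_smul a).congr_deriv (cross3_smul_left a (w t) _).symm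

lemma hamiltonian60_blowdown (I1 I2 I3 M1 M2 M3 : ℝ) (x : E3 × E3 × ℝ × ℝ) :
    hamiltonian60 I1 I2 I3 M1 M2 M3 (blowdown x).1 (blowdown x).2
      = (1 / 2) * ⟪x.2.1 + x.2.2.2 • x.1, Iinv I1 I2 I3 (x.2.1 + x.2.2.2 • x.1)⟫
        + (1 / 2) * x.2.2.1 ^ 2 * ⟪x.1, Minv M1 M2 M3 x.1⟫ := by
  simp only [hamiltonian60, blowdown, Minv_smul, inner_smul_left, inner_smul_right, conj_trivial]
  ring

theorem statement8_general (I1 I2 I3 M1 M2 M3 : ℝ)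
    (a γ : ℝ)
    (w dw : ℝ → E3) (hsol : IsSol8 I1 I2 I3 M1 M2 M3 a γ w dw) :
    (∀ s t : ℝ,
      (1 / 2) * ⟪dw t + γ • w t, Iinv I1 I2 I3 (dw t + γ • w t)⟫
          + (1 / 2) * a ^ 2 * ⟪w t, Minv M1 M2 M3 (w t)⟫
        = (1 / 2) * ⟪dw s + γ • w s, Iinv I1 I2 I3 (dw s + γ • w s)⟫
          + (1 / 2) * a ^ 2 * ⟪w s, Minv M1 M2 M3 (w s)⟫) ∧
    (a = 0 → ∀ s t : ℝ, ‖dw t + γ • w t‖ = ‖dw s + γ • w s‖) ∧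
    (a = 0 → ‖w 0‖ = 1 → ⟪w 0, dw 0⟫ = 0 → ∀ s t : ℝ, ‖dw t‖ = ‖dw s‖) := by
  have hsol60 := hsol.isSol60_blowdown
  refine ⟨fun s t => ?_, fun ha s t => ?_, fun ha _ _ s t => ?_⟩
  · simpa only [hamiltonian60_blowdown] using hsol60.hamiltonian60_eq s t
  · subst ha
    refine norm_eq_of_forall_inner_hasDerivAt_eq_zero hsol60.1 (fun t => ?_) s t
    simp only [blowdown, zero_smul, cross3_zero_left, add_zero]
    rw [real_inner_comm, inner_cross3_self_left]
  · subst ha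
    refine norm_eq_of_forall_inner_hasDerivAt_eq_zero hsol.2 (fun t => ?_) s t
    rw [zero_pow two_ne_zero, zero_smul, add_zero, real_inner_comm, inner_cross3_self_left]

/-- along every solution of (8) the pulled-back energy
Ĥ = ½(ẇ+γw)·(𝐈⁻¹(ẇ+γw)) + ½a² w·(𝐌⁻¹w) is constant; if a = 0 then ‖ẇ+γw‖ is
constant, and if moreover ‖w(0)‖ = 1 and w(0)·ẇ(0) = 0 then ‖ẇ‖ is constant. -/
theorem statement8 (I1 I2 I3 M1 M2 M3 : ℝ)
    (hI1 : 0 < I1) (hI2 : 0 < I2) (hI3 : 0 < I3)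
    (hM1 : 0 < M1) (hM2 : 0 < M2) (hM3 : 0 < M3)
    (a γ : ℝ) (ha : 0 ≤ a)
    (w dw : ℝ → E3) (hsol : IsSol8 I1 I2 I3 M1 M2 M3 a γ w dw) :
    (∀ s t : ℝ,
      (1 / 2) * ⟪dw t + γ • w t, Iinv I1 I2 I3 (dw t + γ • w t)⟫
          + (1 / 2) * a ^ 2 * ⟪w t, Minv M1 M2 M3 (w t)⟫
        = (1 / 2) * ⟪dw s + γ • w s, Iinv I1 I2 I3 (dw s + γ • w s)⟫
          + (1 / 2) * a ^ 2 * ⟪w s, Minv M1 M2 M3 (w s)⟫) ∧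
    (a = 0 → ∀ s t : ℝ, ‖dw t + γ • w t‖ = ‖dw s + γ • w s‖) ∧
    (a = 0 → ‖w 0‖ = 1 → ⟪w 0, dw 0⟫ = 0 → ∀ s t : ℝ, ‖dw t‖ = ‖dw s‖) :=
  statement8_general I1 I2 I3 M1 M2 M3 a γ w dw hsol
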